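/- Let κ be a positive integer and u a nonzero real number. Then for every real z, lim_{a→1} m_κ^{1/a, -κ+1-(1-a)^κ/u}(z) = (-1)^κ/(κ u) + (z-κ+1)_κ / κ!, where (y)_κ is the Pochhammer symbol. -/

import Mathlib

/-!
Put `t = a - 1`. Expanding `(1 + t) ^ j` binomially and applying Chu–Vandermonde turns the
Meixner sum into `m_n^{1/a, c}(x) = t⁻ⁿ ∑ᵢ tⁱ C(x, i) C(-c - i, n - i)`. For `c = -n + 1 - e`
the term `i = n` is `tⁿ C(x, n)`, while for `i < n` the top argument of
`C(n - 1 - i + e, n - i)` is `e` more than one below the bottom one, so this coefficient is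
`e / (n - i) · C(n - 1 - i + e, n - 1 - i)`. With `e = (1 - a)ⁿ / u` we get `e / tⁿ = (-1)ⁿ / u`,
and what remains is a polynomial in `(t, e)` whose value at `(0, 0)` is its `i = 0` term
`C(n - 1, n - 1) / n = 1 / n`.
-/

open Filter Topology Finset

/-- Generalized binomial coefficient C(y, k) = y(y-1)⋯(y-k+1)/k!. -/
noncomputable def gbinom (y : ℝ) (k : ℕ) : ℝ :=
  (∏ i ∈ Finset.range k, (y - i)) / (Nat.factorial k)

/-- Pochhammer symbol (y)_k = y(y+1)⋯(y+k-1). -/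
noncomputable def poch (y : ℝ) (k : ℕ) : ℝ :=
  ∏ i ∈ Finset.range k, (y + i)

/-- Meixner polynomial m_n^{a,c}(x). -/
noncomputable def meixner (n : ℕ) (a c x : ℝ) : ℝ :=
  (a ^ n / (1 - a) ^ n) *
    ∑ j ∈ Finset.range (n + 1), (a⁻¹) ^ j * gbinom x j * gbinom (-x - c) (n - j)

lemma descPochhammer_smeval_eq_prod_range {R : Type*} [CommRing R] (y : R) (k : ℕ) :
    (descPochhammer ℤ k).smeval y = ∏ i ∈ range k, (y - i) := by
  induction k with
  | zero => simp [Polynomial.smeval_one]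
  | succ k ih =>
    rw [descPochhammer_succ_right, Polynomial.smeval_mul, ih, prod_range_succ,
      Polynomial.smeval_sub, Polynomial.smeval_X, Polynomial.smeval_natCast]
    simp

lemma gbinom_eq_choose (y : ℝ) (k : ℕ) : gbinom y k = Ring.choose y k := by
  rw [Ring.choose_eq_smul, descPochhammer_smeval_eq_prod_range, smul_eq_mul, gbinom,
    div_eq_inv_mul]

@[fun_prop]
lemma continuous_gbinom (k : ℕ) : Continuous fun y => gbinom y k :=
  (continuous_finsetProd _ fun _ _ => continuous_id.sub continuous_const).div_const _

lemma gbinom_zero_right (y : ℝ) : gbinom y 0 = 1 := by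
  simp [gbinom]

lemma gbinom_natCast_self (n : ℕ) : gbinom n n = 1 := by
  rw [gbinom_eq_choose, Ring.choose_natCast, Nat.choose_self, Nat.cast_one]

lemma gbinom_natCast_add_succ (n : ℕ) (e : ℝ) :
    gbinom (n + e) (n + 1) = e / (n + 1) * gbinom (n + e) n := by
  simp only [gbinom, prod_range_succ, Nat.factorial_succ]
  push_cast
  field_simp
  ring

lemma gbinom_eq_poch (y : ℝ) (k : ℕ) : gbinom y k = poch (y - k + 1) k / k.factorial := by
  rw [gbinom, poch, ← prod_range_reflect]
  congr 1
  refine prod_congr rfl fun i hi => ?_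
  have hi : 1 + i ≤ k := by rw [add_comm]; exact mem_range.mp hi
  rw [Nat.sub_sub, Nat.cast_sub hi]
  push_cast
  ring

lemma gbinom_add (x y : ℝ) (n : ℕ) :
    gbinom (x + y) n = ∑ j ∈ range (n + 1), gbinom x j * gbinom y (n - j) := by
  simp only [gbinom_eq_choose]
  rw [Ring.add_choose_eq n (Commute.all x y), Nat.sum_antidiagonal_eq_sum_range_succ_mk]

lemma choose_mul_gbinom {i j : ℕ} (hij : i ≤ j) (x : ℝ) :
    j.choose i * gbinom x j = gbinom x i * gbinom (x - i) (j - i) := by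
  simp only [gbinom_eq_choose]
  rw [← nsmul_eq_mul, Ring.choose_smul_choose x hij]

lemma sum_one_add_pow_mul_gbinom_mul_gbinom (t x y : ℝ) (n : ℕ) :
    ∑ j ∈ range (n + 1), (1 + t) ^ j * gbinom x j * gbinom y (n - j) =
      ∑ i ∈ range (n + 1), t ^ i * gbinom x i * gbinom (x + y - i) (n - i) := by
  set f : ℕ → ℕ → ℝ := fun i l => t ^ i * gbinom x i * gbinom (x - i) l * gbinom y (n - (i + l))
  calc _ = ∑ j ∈ range (n + 1), ∑ i ∈ range (j + 1), f i (j - i) := by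
        refine sum_congr rfl fun j _ => ?_
        rw [add_comm 1 t, add_pow, sum_mul, sum_mul]
        refine sum_congr rfl fun i hi => ?_
        have hij : i ≤ j := Nat.lt_succ_iff.mp (mem_range.mp hi)
        rw [one_pow, mul_one, mul_assoc, mul_assoc, ← mul_assoc (j.choose i : ℝ),
          choose_mul_gbinom hij]
        simp only [f, Nat.add_sub_cancel' hij]
        ring
    _ = ∑ i ∈ range (n + 1), ∑ l ∈ range (n + 1 - i), f i l := sum_range_diag_flip _ f
    _ = _ := by
        refine sum_congr rfl fun i hi => ?_
        have hin : n + 1 - i = n - i + 1 := by have := mem_range.mp hi; omega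
        simp only [f, mul_assoc, ← mul_sum]
        rw [hin, ← sub_add_eq_add_sub, gbinom_add]
        simp only [Nat.sub_sub]

lemma meixner_inv_eq {a : ℝ} (ha : a ≠ 0) (ha1 : a ≠ 1) (n : ℕ) (c x : ℝ) :
    meixner n a⁻¹ c x =
      (∑ i ∈ range (n + 1), (a - 1) ^ i * gbinom x i * gbinom (-c - i) (n - i)) / (a - 1) ^ n := by
  have hpre : a⁻¹ ^ n / (1 - a⁻¹) ^ n = 1 / (a - 1) ^ n := by
    rw [← div_pow, ← one_div_pow]
    congr 1
    field_simp
  have hsum := sum_one_add_pow_mul_gbinom_mul_gbinom (a - 1) x (-x - c) n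
  simp only [add_sub_cancel] at hsum
  rw [meixner, hpre, inv_inv, hsum]
  ring_nf

noncomputable def meixnerCorrection (n : ℕ) (x t e : ℝ) : ℝ :=
  ∑ i ∈ range (n + 1), t ^ i * gbinom x i * (gbinom ((n - i : ℕ) + e) (n - i) / ((n - i : ℕ) + 1))

lemma continuous_meixnerCorrection (n : ℕ) (x : ℝ) :
    Continuous fun p : ℝ × ℝ => meixnerCorrection n x p.1 p.2 := by
  unfold meixnerCorrection
  fun_prop

lemma meixnerCorrection_zero_zero (n : ℕ) (x : ℝ) : meixnerCorrection n x 0 0 = 1 / (n + 1) := by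
  rw [meixnerCorrection, sum_range_succ']
  simp [gbinom_zero_right, gbinom_natCast_self]

lemma meixner_inv_eq_gbinom_add_meixnerCorrection {a : ℝ} (ha : a ≠ 0) (ha1 : a ≠ 1)
    (n : ℕ) (e x : ℝ) :
    meixner (n + 1) a⁻¹ (-((n + 1 : ℕ) : ℝ) + 1 - e) x =
      gbinom x (n + 1) + e / (a - 1) ^ (n + 1) * meixnerCorrection n x (a - 1) e := by
  have hterm : ∀ i ∈ range (n + 1),
      (a - 1) ^ i * gbinom x i * gbinom (-(-((n + 1 : ℕ) : ℝ) + 1 - e) - i) (n + 1 - i) =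
        e * ((a - 1) ^ i * gbinom x i *
          (gbinom ((n - i : ℕ) + e) (n - i) / ((n - i : ℕ) + 1))) := by
    intro i hi
    have hin : i ≤ n := Nat.lt_succ_iff.mp (mem_range.mp hi)
    have harg : -(-((n + 1 : ℕ) : ℝ) + 1 - e) - i = (n - i : ℕ) + e := by
      rw [Nat.cast_sub hin]; push_cast; ring
    rw [harg, Nat.sub_add_comm hin, gbinom_natCast_add_succ]
    ring
  have hne : (a - 1) ^ (n + 1) ≠ 0 := pow_ne_zero _ (sub_ne_zero.mpr ha1)
  rw [meixner_inv_eq ha ha1, sum_range_succ, sum_congr rfl hterm, ← mul_sum, Nat.sub_self,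
    gbinom_zero_right, meixnerCorrection]
  field_simp
  ring

theorem stmt8_general (κ : ℕ) (hκ : 0 < κ) (u : ℝ) (z : ℝ) :
    Tendsto (fun a : ℝ => meixner κ a⁻¹ (-(κ : ℝ) + 1 - (1 - a) ^ κ / u) z)
      (𝓝[({0, 1} : Set ℝ)ᶜ] (1 : ℝ))
      (𝓝 ((-1) ^ κ / (κ * u) + poch (z - κ + 1) κ / (Nat.factorial κ))) := by
  obtain ⟨n, rfl⟩ : ∃ n, κ = n + 1 := ⟨κ - 1, by omega⟩
  set F : ℝ → ℝ := fun a =>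
    gbinom z (n + 1) + (-1) ^ (n + 1) / u * meixnerCorrection n z (a - 1) ((1 - a) ^ (n + 1) / u)
  have hF : ∀ a ∈ ({0, 1} : Set ℝ)ᶜ,
      F a = meixner (n + 1) a⁻¹ (-((n + 1 : ℕ) : ℝ) + 1 - (1 - a) ^ (n + 1) / u) z := by
    intro a ha
    simp only [Set.mem_compl_iff, Set.mem_insert_iff, Set.mem_singleton_iff, not_or] at ha
    have hne : (a - 1) ^ (n + 1) ≠ 0 := pow_ne_zero _ (sub_ne_zero.mpr ha.2)
    have hsign : (1 - a) ^ (n + 1) / u / (a - 1) ^ (n + 1) = (-1) ^ (n + 1) / u := by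
      rw [← neg_sub a 1, neg_pow]
      field_simp
    rw [meixner_inv_eq_gbinom_add_meixnerCorrection ha.1 ha.2, hsign]
  have hF1 : F 1 = (-1) ^ (n + 1) / ((n + 1 : ℕ) * u) +
      poch (z - (n + 1 : ℕ) + 1) (n + 1) / (n + 1).factorial := by
    simp only [F, sub_self, zero_pow n.succ_ne_zero, zero_div, meixnerCorrection_zero_zero,
      gbinom_eq_poch]
    push_cast
    rw [div_mul_div_comm, mul_one, mul_comm u, add_comm]
  have hcont : Continuous F := by
    have := continuous_meixnerCorrection n z
    fun_prop
  rw [← hF1]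
  exact ((hcont.tendsto 1).mono_left nhdsWithin_le_nhds).congr'
    (eventually_nhdsWithin_of_forall hF)

theorem stmt8 (κ : ℕ) (hκ : 0 < κ) (u : ℝ) (hu : u ≠ 0) (z : ℝ) :
    Tendsto (fun a : ℝ => meixner κ a⁻¹ (-(κ : ℝ) + 1 - (1 - a) ^ κ / u) z)
      (𝓝[({0, 1} : Set ℝ)ᶜ] (1 : ℝ))
      (𝓝 ((-1) ^ κ / (κ * u) + poch (z - κ + 1) κ / (Nat.factorial κ))) :=
  stmt8_general κ hκ u z
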